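/- arXiv:2509.04614 — 2 statements merged into one kernel-verified Lean document; each statement's English description precedes it below -/
import Mathlib

section
/- For m ≥ 1, any triangulation T of a convex (m+1)-gon with vertices labeled 0,...,m admits exactly one proper coloring c of its vertices by the 3 elements of the projective line over F_2 such that c(0) = [1:0] and c(m) = [0:1], where properness means c(i) ≠ c(j) whenever ij is an edge or diagonal of T. -/
/-- The projective line over a field `F`. -/
abbrev P1 (F : Type*) [Field F] := Projectivization F (F × F)

/-- The point `[1:0]` of the projective line. -/
noncomputable def ptZero (F : Type*) [Field F] : P1 F :=
  Projectivization.mk F (1, 0) (fun h => one_ne_zero (congrArg Prod.fst h))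

/-- The point `[0:1]` of the projective line. -/
noncomputable def ptInf (F : Type*) [Field F] : P1 F :=
  Projectivization.mk F (0, 1) (fun h => one_ne_zero (congrArg Prod.snd h))

/-- The point `[1:1]` of the projective line. -/
noncomputable def ptOne (F : Type*) [Field F] : P1 F :=
  Projectivization.mk F (1, 1) (fun h => one_ne_zero (congrArg Prod.fst h))

/-- `p = (i, j)` is a diagonal of the convex `(m+1)`-gon with vertices `0, …, m`:
`i < j`, the two vertices are not consecutive, and `(0, m)` is excluded (it is a side). -/
def IsDiag (m : ℕ) (p : ℕ × ℕ) : Prop :=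
  p.1 + 2 ≤ p.2 ∧ p.2 ≤ m ∧ ¬(p.1 = 0 ∧ p.2 = m)

instance (m : ℕ) (p : ℕ × ℕ) : Decidable (IsDiag m p) := by unfold IsDiag; infer_instance

/-- The type of diagonals of the convex `(m+1)`-gon. -/
abbrev Diagonal (m : ℕ) := {p : ℕ × ℕ // IsDiag m p}

/-- Two diagonals cross in the interior of the polygon. -/
def Crossing {m : ℕ} (d e : Diagonal m) : Prop :=
  (d.val.1 < e.val.1 ∧ e.val.1 < d.val.2 ∧ d.val.2 < e.val.2) ∨
  (e.val.1 < d.val.1 ∧ d.val.1 < e.val.2 ∧ e.val.2 < d.val.2)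

/-- A triangulation of the convex `(m+1)`-gon: a maximal set of pairwise
non-crossing diagonals (maximality = having `(m+1) - 3` diagonals). -/
structure Triangulation (m : ℕ) where
  diags : Finset (Diagonal m)
  noncross : ∀ d ∈ diags, ∀ e ∈ diags, ¬ Crossing d e
  card_eq : diags.card = m - 2

/-- `y` takes distinct values on the endpoints of every diagonal of `T`
(i.e. `y` lies in the cluster torus of `T`). -/
def ProperDiags {F : Type*} [Field F] {m : ℕ} (T : Triangulation m) (y : ℕ → P1 F) : Prop :=
  ∀ d ∈ T.diags, y d.val.1 ≠ y d.val.2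

/-- `c` is a proper coloring of the full graph of the triangulation `T`
(sides of the polygon together with the diagonals of `T`). -/
def ProperGraph {F : Type*} [Field F] {m : ℕ} (T : Triangulation m) (c : ℕ → P1 F) : Prop :=
  (∀ i < m, c i ≠ c (i + 1)) ∧ c m ≠ c 0 ∧ ProperDiags T c

/-- `y` is a point of `X_F(m)`: `y 0 = [1:0]`, `y m = [0:1]`, consecutive entries distinct. -/
def XCond (F : Type*) [Field F] (m : ℕ) (y : ℕ → P1 F) : Prop :=
  y 0 = ptZero F ∧ y m = ptInf F ∧ ∀ i < m, y i ≠ y (i + 1)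

/-- `y` is the alternating sequence `([1:0], [0:1], [1:0], …)` on `0, …, m`. -/
def IsAltSeq (F : Type*) [Field F] (m : ℕ) (y : ℕ → P1 F) : Prop :=
  ∀ i ≤ m, y i = if i % 2 = 0 then ptZero F else ptInf F

/-- The diagonal `d` is valid for the point `y`: its endpoints have distinct labels and
on each of the two sub-polygons determined by `d` the labels take at least three values. -/
def ValidDiag (F : Type*) [Field F] (m : ℕ) (y : ℕ → P1 F) (d : Diagonal m) : Prop :=
  y d.val.1 ≠ y d.val.2 ∧
  3 ≤ (y '' (Set.Icc d.val.1 d.val.2)).ncard ∧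
  3 ≤ (y '' (Set.Icc 0 d.val.1 ∪ Set.Icc d.val.2 m)).ncard

/-- `T'` is obtained from `T` by removing the diagonals `old` and adding the diagonals `new`. -/
def SwapMove {m : ℕ} (T T' : Triangulation m) (old new : Finset (Diagonal m)) : Prop :=
  old ⊆ T.diags ∧ T'.diags = (T.diags \ old) ∪ new

/-- Zig-zag hexagonal move: inside a hexagonal sub-polygon with vertices
`v 0 < ⋯ < v 5`, replace the zig-zag `{15, 35, 36}` by the zig-zag `{24, 26, 46}`
(in the labels `1, …, 6` of the hexagon). -/
def ZigZagMoveOne {m : ℕ} (T T' : Triangulation m) : Prop :=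
  ∃ v : Fin 6 → ℕ, StrictMono v ∧ v 5 ≤ m ∧
    ∃ (h1 : IsDiag m (v 0, v 4)) (h2 : IsDiag m (v 2, v 4)) (h3 : IsDiag m (v 2, v 5))
      (h4 : IsDiag m (v 1, v 3)) (h5 : IsDiag m (v 1, v 5)) (h6 : IsDiag m (v 3, v 5)),
      SwapMove T T' {⟨(v 0, v 4), h1⟩, ⟨(v 2, v 4), h2⟩, ⟨(v 2, v 5), h3⟩}
        {⟨(v 1, v 3), h4⟩, ⟨(v 1, v 5), h5⟩, ⟨(v 3, v 5), h6⟩}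

/-- Inscribed-triangle hexagonal move: inside a hexagonal sub-polygon with vertices
`v 0 < ⋯ < v 5`, replace the inscribed triangle `{13, 35, 51}` by `{24, 46, 62}`. -/
def InscribedMoveOne {m : ℕ} (T T' : Triangulation m) : Prop :=
  ∃ v : Fin 6 → ℕ, StrictMono v ∧ v 5 ≤ m ∧
    ∃ (h1 : IsDiag m (v 0, v 2)) (h2 : IsDiag m (v 2, v 4)) (h3 : IsDiag m (v 0, v 4))
      (h4 : IsDiag m (v 1, v 3)) (h5 : IsDiag m (v 3, v 5)) (h6 : IsDiag m (v 1, v 5)),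
      SwapMove T T' {⟨(v 0, v 2), h1⟩, ⟨(v 2, v 4), h2⟩, ⟨(v 0, v 4), h3⟩}
        {⟨(v 1, v 3), h4⟩, ⟨(v 3, v 5), h5⟩, ⟨(v 1, v 5), h6⟩}

/-- A hexagonal move (in either direction). -/
def HexMove {m : ℕ} (T T' : Triangulation m) : Prop :=
  ZigZagMoveOne T T' ∨ ZigZagMoveOne T' T ∨ InscribedMoveOne T T' ∨ InscribedMoveOne T' T

section P1Facts

lemma zmod2_cases (x : ZMod 2) : x = 0 ∨ x = 1 := by revert x; decide

lemma P1_cases (x : P1 (ZMod 2)) :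
    x = ptZero (ZMod 2) ∨ x = ptInf (ZMod 2) ∨ x = ptOne (ZMod 2) := by
  induction x using Projectivization.ind with
  | h v hv =>
    obtain ⟨v1, v2⟩ := v
    rcases zmod2_cases v1 with h1 | h1 <;> rcases zmod2_cases v2 with h2 | h2 <;> subst h1 h2
    · exact absurd rfl hv
    · right; left; rfl
    · left; rfl
    · right; right; rfl

lemma units_zmod2 (a : (ZMod 2)ˣ) : (a : ZMod 2) = 1 := by revert a; decide

lemma mk_inj {v w : ZMod 2 × ZMod 2} (hv : v ≠ 0) (hw : w ≠ 0) :
    Projectivization.mk (ZMod 2) v hv = Projectivization.mk (ZMod 2) w hw ↔ v = w := by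
  rw [Projectivization.mk_eq_mk_iff]
  constructor
  · rintro ⟨a, ha⟩
    have := units_zmod2 a
    rw [← ha, Units.smul_def, this, one_smul]
  · rintro rfl; exact ⟨1, one_smul _ _⟩

lemma ptZero_ne_ptInf : ptZero (ZMod 2) ≠ ptInf (ZMod 2) := by
  rw [ptZero, ptInf, Ne, mk_inj]; decide
lemma ptZero_ne_ptOne : ptZero (ZMod 2) ≠ ptOne (ZMod 2) := by
  rw [ptZero, ptOne, Ne, mk_inj]; decide
lemma ptInf_ne_ptOne : ptInf (ZMod 2) ≠ ptOne (ZMod 2) := by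
  rw [ptInf, ptOne, Ne, mk_inj]; decide

noncomputable instance : DecidableEq (P1 (ZMod 2)) := Classical.decEq _

noncomputable def other (x y : P1 (ZMod 2)) : P1 (ZMod 2) :=
  if ptZero (ZMod 2) ≠ x ∧ ptZero (ZMod 2) ≠ y then ptZero (ZMod 2)
  else if ptInf (ZMod 2) ≠ x ∧ ptInf (ZMod 2) ≠ y then ptInf (ZMod 2)
  else ptOne (ZMod 2)

lemma other_spec {x y : P1 (ZMod 2)} (h : x ≠ y) : other x y ≠ x ∧ other x y ≠ y := by
  rcases P1_cases x with hx | hx | hx <;> rcases P1_cases y with hy | hy | hy <;>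
    subst hx hy <;>
    simp_all [other, ptZero_ne_ptInf, ptZero_ne_ptOne, ptInf_ne_ptOne,
      ptZero_ne_ptInf.symm, ptZero_ne_ptOne.symm, ptInf_ne_ptOne.symm]

lemma third_unique {a b x y : P1 (ZMod 2)} (hab : a ≠ b) (hxa : x ≠ a) (hxb : x ≠ b)
    (hya : y ≠ a) (hyb : y ≠ b) : x = y := by
  rcases P1_cases a with h | h | h <;> rcases P1_cases b with h' | h' | h' <;>
    rcases P1_cases x with h'' | h'' | h'' <;> rcases P1_cases y with h''' | h''' | h''' <;>
    subst h h' h'' h''' <;>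
    simp_all [ptZero_ne_ptInf, ptZero_ne_ptOne, ptInf_ne_ptOne,
      ptZero_ne_ptInf.symm, ptZero_ne_ptOne.symm, ptInf_ne_ptOne.symm]

end P1Facts
section Comb

def Crossing' (p q : ℕ × ℕ) : Prop :=
  (p.1 < q.1 ∧ q.1 < p.2 ∧ p.2 < q.2) ∨ (q.1 < p.1 ∧ p.1 < q.2 ∧ q.2 < p.2)

def fshift (a b j : ℕ) : ℕ := if j ≤ a then j else j - (b - a - 1)

lemma no_touch {m a b : ℕ} {D : Finset (ℕ × ℕ)}
    (hd : ∀ p ∈ D, IsDiag m p)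
    (hc : ∀ p ∈ D, ∀ q ∈ D, ¬ Crossing' p q)
    (hab : (a, b) ∈ D)
    (hmin : ∀ p ∈ D, b - a ≤ p.2 - p.1) :
    ∀ p ∈ D, ¬(a < p.1 ∧ p.1 < b) ∧ ¬(a < p.2 ∧ p.2 < b) := by
  intro p hp
  have h1 := hd p hp
  have h2 := hd _ hab
  have h3 := hc _ hab p hp
  have h4 := hmin p hp
  unfold IsDiag at h1 h2
  unfold Crossing' at h3
  push_neg at h3
  simp only [not_and, not_lt] at h3 ⊢
  omega

lemma collapse_main {m a b : ℕ} {D : Finset (ℕ × ℕ)}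
    (hd : ∀ p ∈ D, IsDiag m p)
    (hc : ∀ p ∈ D, ∀ q ∈ D, ¬ Crossing' p q)
    (hab : (a, b) ∈ D)
    (hnt : ∀ p ∈ D, ¬(a < p.1 ∧ p.1 < b) ∧ ¬(a < p.2 ∧ p.2 < b)) :
    (∀ p ∈ (D.erase (a, b)).image (fun p => (fshift a b p.1, fshift a b p.2)),
        IsDiag (m - (b - a - 1)) p) ∧
    (∀ p ∈ (D.erase (a, b)).image (fun p => (fshift a b p.1, fshift a b p.2)),
        ∀ q ∈ (D.erase (a, b)).image (fun p => (fshift a b p.1, fshift a b p.2)),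
        ¬ Crossing' p q) ∧
    ((D.erase (a, b)).image (fun p => (fshift a b p.1, fshift a b p.2))).card = D.card - 1 := by
  have hABd := hd _ hab
  have hba : a + 2 ≤ b := hABd.1
  have hbm : b ≤ m := hABd.2.1
  -- endpoints of erased diagonals lie outside the open interval (a, b)
  have hS : ∀ p ∈ D.erase (a, b),
      (p.1 ≤ a ∨ b ≤ p.1) ∧ (p.2 ≤ a ∨ b ≤ p.2) ∧ (p.1 + 2 ≤ p.2) ∧ p.2 ≤ m ∧
        ¬(p.1 = 0 ∧ p.2 = m) ∧ (p.1 < a ∨ b < p.2) := by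
    intro p hp
    have hpD : p ∈ D := Finset.mem_of_mem_erase hp
    have hne : p ≠ (a, b) := Finset.ne_of_mem_erase hp
    have h1 := hd p hpD
    have h2 := hnt p hpD
    unfold IsDiag at h1
    have hne' : ¬(p.1 = a ∧ p.2 = b) := by
      rintro ⟨hx, hy⟩
      exact hne (Prod.ext_iff.mpr ⟨hx, hy⟩)
    omega
  have key : ∀ x y : ℕ, (x ≤ a ∨ b ≤ x) → (y ≤ a ∨ b ≤ y) →
      (fshift a b x < fshift a b y ↔ x < y) := by
    intro x y hx hy
    unfold fshift
    split <;> split <;> omega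
  have keq : ∀ x y : ℕ, (x ≤ a ∨ b ≤ x) → (y ≤ a ∨ b ≤ y) →
      fshift a b x = fshift a b y → x = y := by
    intro x y hx hy
    unfold fshift
    split <;> split <;> omega
  refine ⟨?_, ?_, ?_⟩
  · intro q hq
    rw [Finset.mem_image] at hq
    obtain ⟨p, hp, rfl⟩ := hq
    have h := hS p hp
    unfold IsDiag fshift
    simp only
    split <;> split <;> omega
  · intro q hq r hr
    rw [Finset.mem_image] at hq hr
    obtain ⟨p, hp, rfl⟩ := hq
    obtain ⟨p', hp', rfl⟩ := hr
    have h := hS p hp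
    have h' := hS p' hp'
    have hnc := hc p (Finset.mem_of_mem_erase hp) p' (Finset.mem_of_mem_erase hp')
    intro hcr
    apply hnc
    unfold Crossing' at hcr ⊢
    simp only at hcr
    rcases hcr with ⟨u1, u2, u3⟩ | ⟨u1, u2, u3⟩
    · exact Or.inl ⟨(key _ _ h.1 h'.1).mp u1, (key _ _ h'.1 h.2.1).mp u2,
        (key _ _ h.2.1 h'.2.1).mp u3⟩
    · exact Or.inr ⟨(key _ _ h'.1 h.1).mp u1, (key _ _ h.1 h'.2.1).mp u2,
        (key _ _ h'.2.1 h.2.1).mp u3⟩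
  · rw [Finset.card_image_of_injOn, Finset.card_erase_of_mem hab]
    intro p hp p' hp' heq
    have h := hS p hp
    have h' := hS p' hp'
    simp only [Prod.mk.injEq] at heq
    have e1 := keq _ _ h.1 h'.1 heq.1
    have e2 := keq _ _ h.2.1 h'.2.1 heq.2
    exact Prod.ext e1 e2

lemma card_le : ∀ m : ℕ, ∀ D : Finset (ℕ × ℕ), (∀ p ∈ D, IsDiag m p) →
    (∀ p ∈ D, ∀ q ∈ D, ¬ Crossing' p q) → D.card ≤ m - 2 := by
  intro m
  induction m using Nat.strong_induction_on with
  | _ m IH =>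
    intro D hd hc
    rcases D.eq_empty_or_nonempty with rfl | hne
    · simp
    · obtain ⟨⟨a, b⟩, hab, hmin⟩ := Finset.exists_min_image D (fun p => p.2 - p.1) hne
      have h2 := hd _ hab
      have hnt := no_touch hd hc hab (fun p hp => hmin p hp)
      obtain ⟨hD1, hD2, hD3⟩ := collapse_main hd hc hab hnt
      have h2' : a + 2 ≤ b ∧ b ≤ m ∧ ¬(a = 0 ∧ b = m) := h2
      have hm' : m - (b - a - 1) < m := by omega
      have hle := IH _ hm' _ hD1 hD2
      have hcard : 1 ≤ D.card := Finset.card_pos.mpr hne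
      rw [hD3] at hle
      generalize D.card = N at hle hcard ⊢
      omega

lemma exists_ear {m : ℕ} (hm : 3 ≤ m) (T : Triangulation m) :
    ∃ a, a + 2 ≤ m ∧ (∃ h : IsDiag m (a, a + 2), (⟨(a, a + 2), h⟩ : Diagonal m) ∈ T.diags) ∧
      ∀ d ∈ T.diags, d.val.1 ≠ a + 1 ∧ d.val.2 ≠ a + 1 := by
  classical
  have hd : ∀ p ∈ T.diags.image Subtype.val, IsDiag m p := by
    intro p hp; rw [Finset.mem_image] at hp; obtain ⟨d, _, rfl⟩ := hp; exact d.prop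
  have hc : ∀ p ∈ T.diags.image Subtype.val, ∀ q ∈ T.diags.image Subtype.val,
      ¬ Crossing' p q := by
    intro p hp q hq; rw [Finset.mem_image] at hp hq
    obtain ⟨d, hdm, rfl⟩ := hp; obtain ⟨e, hem, rfl⟩ := hq
    exact T.noncross d hdm e hem
  have hcard : (T.diags.image Subtype.val).card = m - 2 := by
    rw [Finset.card_image_of_injective _ Subtype.val_injective, T.card_eq]
  have hne : (T.diags.image Subtype.val).Nonempty := Finset.card_pos.mp (by omega)
  obtain ⟨⟨a, b⟩, hab, hmin⟩ :=
    Finset.exists_min_image (T.diags.image Subtype.val) (fun p => p.2 - p.1) hne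
  have h2 := hd _ hab
  have hnt := no_touch hd hc hab (fun p hp => hmin p hp)
  obtain ⟨hD1, hD2, hD3⟩ := collapse_main hd hc hab hnt
  have hle := card_le _ _ hD1 hD2
  have hb2 : b = a + 2 := by
    have h2' : a + 2 ≤ b ∧ b ≤ m ∧ ¬(a = 0 ∧ b = m) := h2
    rw [hD3, hcard] at hle
    omega
  subst hb2
  refine ⟨a, h2.2.1, ?_, ?_⟩
  · rw [Finset.mem_image] at hab
    obtain ⟨d, hdm, hval⟩ := hab
    exact ⟨h2, by rwa [show (⟨(a, a + 2), h2⟩ : Diagonal m) = d from Subtype.ext hval.symm]⟩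
  · intro d hdm
    have hpD : d.val ∈ T.diags.image Subtype.val := Finset.mem_image_of_mem _ hdm
    have h := hnt d.val hpD
    omega

end Comb
lemma main_aux : ∀ m : ℕ, 1 ≤ m → ∀ T : Triangulation m,
    ∃ c : ℕ → P1 (ZMod 2),
      c 0 = ptZero (ZMod 2) ∧ c m = ptInf (ZMod 2) ∧ ProperGraph T c ∧
      ∀ c' : ℕ → P1 (ZMod 2), c' 0 = ptZero (ZMod 2) → c' m = ptInf (ZMod 2) →
        ProperGraph T c' → ∀ i ≤ m, c' i = c i := by
  intro m
  induction m using Nat.strong_induction_on with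
  | _ m IH =>
  intro hm T
  rcases Nat.lt_or_ge m 3 with h3 | h3
  · -- small cases m = 1, 2
    have hempty : T.diags = ∅ := Finset.card_eq_zero.mp (by rw [T.card_eq]; omega)
    have hPD : ∀ c : ℕ → P1 (ZMod 2), ProperDiags T c := by
      intro c d hd; rw [hempty] at hd; exact absurd hd (Finset.notMem_empty d)
    interval_cases m
    · -- m = 1
      refine ⟨fun j => if j = 0 then ptZero (ZMod 2) else ptInf (ZMod 2),
        by simp, by norm_num, ⟨?_, ?_, hPD _⟩, ?_⟩
      · intro i hi
        interval_cases i
        simpa using ptZero_ne_ptInf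
      · simpa using ptZero_ne_ptInf.symm
      · intro c' h0 h1 _ i hi
        interval_cases i
        · rw [h0]; simp
        · rw [h1]; norm_num
    · -- m = 2
      refine ⟨fun j => if j = 0 then ptZero (ZMod 2) else
          if j = 1 then ptOne (ZMod 2) else ptInf (ZMod 2),
        by simp, by norm_num, ⟨?_, ?_, hPD _⟩, ?_⟩
      · intro i hi
        interval_cases i
        · simpa using ptZero_ne_ptOne
        · simpa using ptInf_ne_ptOne.symm
      · simpa using ptZero_ne_ptInf.symm
      · intro c' h0 h2 hpg i hi
        interval_cases i
        · rw [h0]; simp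
        · have e1 : c' 1 ≠ ptZero (ZMod 2) := by
            rw [← h0]; exact (hpg.1 0 (by omega)).symm
          have e2 : c' 1 ≠ ptInf (ZMod 2) := by
            rw [← h2]; exact hpg.1 1 (by omega)
          have : c' 1 = ptOne (ZMod 2) :=
            third_unique ptZero_ne_ptInf e1 e2 ptZero_ne_ptOne.symm ptInf_ne_ptOne.symm
          rw [this]; norm_num
        · rw [h2]; norm_num
  · -- m ≥ 3
    obtain ⟨a, haM, ⟨hdiag, hmem⟩, hear⟩ := exists_ear h3 T
    classical
    have hd : ∀ p ∈ T.diags.image Subtype.val, IsDiag m p := by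
      intro p hp; rw [Finset.mem_image] at hp; obtain ⟨d, _, rfl⟩ := hp; exact d.prop
    have hc : ∀ p ∈ T.diags.image Subtype.val, ∀ q ∈ T.diags.image Subtype.val,
        ¬ Crossing' p q := by
      intro p hp q hq; rw [Finset.mem_image] at hp hq
      obtain ⟨d, hdm, rfl⟩ := hp; obtain ⟨e, hem, rfl⟩ := hq
      exact T.noncross d hdm e hem
    have hcardD : (T.diags.image Subtype.val).card = m - 2 := by
      rw [Finset.card_image_of_injective _ Subtype.val_injective, T.card_eq]
    have habD : (a, a + 2) ∈ T.diags.image Subtype.val := Finset.mem_image_of_mem _ hmem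
    have hnt : ∀ p ∈ T.diags.image Subtype.val,
        ¬(a < p.1 ∧ p.1 < a + 2) ∧ ¬(a < p.2 ∧ p.2 < a + 2) := by
      intro p hp
      rw [Finset.mem_image] at hp; obtain ⟨d, hdm, rfl⟩ := hp
      have := hear d hdm
      omega
    obtain ⟨hE1, hE2, hE3⟩ := collapse_main hd hc habD hnt
    set E := ((T.diags.image Subtype.val).erase (a, a + 2)).image
        (fun p => (fshift a (a + 2) p.1, fshift a (a + 2) p.2)) with hEdef
    have hE1' : ∀ p ∈ E, IsDiag (m - 1) p := by
      have he : m - (a + 2 - a - 1) = m - 1 := by omega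
      rwa [he] at hE1
    have hfs : ∀ j, fshift a (a + 2) j = if j < a + 1 then j else j - 1 := by
      intro j; unfold fshift; split <;> split <;> omega
    have hE3' : E.card = m - 3 := by
      rw [hE3, hcardD]
      omega
    set EM : Finset (Diagonal (m - 1)) :=
      E.attach.image (fun q => (⟨q.val, hE1' q.val q.prop⟩ : Diagonal (m - 1))) with hEMdef
    have hEM_mem : ∀ dd : Diagonal (m - 1), dd ∈ EM ↔ dd.val ∈ E := by
      intro dd
      constructor
      · intro h
        rw [hEMdef, Finset.mem_image] at h
        obtain ⟨q, _, rfl⟩ := h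
        exact q.prop
      · intro h
        rw [hEMdef, Finset.mem_image]
        exact ⟨⟨dd.val, h⟩, Finset.mem_attach _ _, Subtype.ext rfl⟩
    have hEM_card : EM.card = m - 3 := by
      have h1 : EM.card = E.attach.card := by
        rw [hEMdef]
        exact Finset.card_image_of_injOn (by
          intro q _ r _ h
          exact Subtype.ext (Subtype.mk_eq_mk.mp h))
      rw [h1, Finset.card_attach, hE3']
    have hTnc : ∀ d ∈ EM, ∀ e ∈ EM, ¬ Crossing d e := by
      intro d hd' e he'
      exact hE2 _ ((hEM_mem d).mp hd') _ ((hEM_mem e).mp he')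
    have hTcard : EM.card = (m - 1) - 2 := by rw [hEM_card]; omega
    obtain ⟨c'', h0'', hM'', hpg'', huniq''⟩ :=
      IH (m - 1) (by omega) (by omega) ⟨EM, hTnc, hTcard⟩
    have hne'' : c'' a ≠ c'' (a + 1) := hpg''.1 a (by omega)
    have hoth := other_spec hne''
    set c : ℕ → P1 (ZMod 2) := fun j => if j < a + 1 then c'' j
      else if j = a + 1 then other (c'' a) (c'' (a + 1)) else c'' (j - 1) with hcdef
    have hclt : ∀ j, j < a + 1 → c j = c'' j := by
      intro j hj; simp only [hcdef]; rw [if_pos hj]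
    have hcmid : c (a + 1) = other (c'' a) (c'' (a + 1)) := by
      simp only [hcdef]; rw [if_neg (by omega)]; simp
    have hcgt : ∀ j, a + 1 < j → c j = c'' (j - 1) := by
      intro j hj; simp only [hcdef]; rw [if_neg (by omega), if_neg (by omega)]
    have hcf : ∀ j, j ≠ a + 1 → c j = c'' (fshift a (a + 2) j) := by
      intro j hj
      rcases Nat.lt_or_ge j (a + 1) with h | h
      · rw [hclt j h, hfs, if_pos h]
      · rw [hcgt j (by omega), hfs, if_neg (by omega)]
    refine ⟨c, ?_, ?_, ⟨?_, ?_, ?_⟩, ?_⟩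
    · rw [hclt 0 (by omega)]; exact h0''
    · rw [hcgt m (by omega)]; exact hM''
    · -- sides
      intro j hj
      rcases Nat.lt_or_ge (j + 1) (a + 1) with h | h
      · rw [hclt j (by omega), hclt (j + 1) h]
        exact hpg''.1 j (by omega)
      · rcases Nat.eq_or_lt_of_le h with h' | h'
        · have hja : j = a := by omega
          rw [hja]
          rw [hclt a (by omega), hcmid]
          exact hoth.1.symm
        · rcases Nat.eq_or_lt_of_le (show a + 1 ≤ j by omega) with h'' | h''
          · rw [show j = a + 1 from h''.symm]
            rw [hcmid, hcgt (a + 1 + 1) (by omega), show a + 1 + 1 - 1 = a + 1 from rfl]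
            exact hoth.2
          · rw [hcgt j h'', hcgt (j + 1) (by omega), show j + 1 - 1 = (j - 1) + 1 by omega]
            exact hpg''.1 (j - 1) (by omega)
    · -- wrap-around side
      rw [hcgt m (by omega), hclt 0 (by omega)]
      exact hpg''.2.1
    · -- diagonals
      intro d hdm
      by_cases hda : d.val = (a, a + 2)
      · rw [hda]
        show c a ≠ c (a + 2)
        rw [hclt a (by omega), hcgt (a + 2) (by omega), show a + 2 - 1 = a + 1 from rfl]
        exact hne''
      · have hne1 := hear d hdm
        have hpE : d.val ∈ (T.diags.image Subtype.val).erase (a, a + 2) :=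
          Finset.mem_erase.mpr ⟨hda, Finset.mem_image_of_mem _ hdm⟩
        have hmemE : (fshift a (a + 2) d.val.1, fshift a (a + 2) d.val.2) ∈ E := by
          rw [hEdef]; exact Finset.mem_image_of_mem _ hpE
        have hddm'' : (⟨(fshift a (a + 2) d.val.1, fshift a (a + 2) d.val.2),
            hE1' _ hmemE⟩ : Diagonal (m - 1)) ∈ EM := (hEM_mem _).mpr hmemE
        have hthis := hpg''.2.2 _ hddm''
        rw [hcf d.val.1 hne1.1, hcf d.val.2 hne1.2]
        exact hthis
    · -- uniqueness
      intro c' h0' hm' hpg' j hj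
      set c₂ : ℕ → P1 (ZMod 2) := fun j => if j < a + 1 then c' j else c' (j + 1) with hc2def
      have h2lt : ∀ k, k < a + 1 → c₂ k = c' k := by
        intro k hk; simp only [hc2def]; rw [if_pos hk]
      have h2ge : ∀ k, a + 1 ≤ k → c₂ k = c' (k + 1) := by
        intro k hk; simp only [hc2def]; rw [if_neg (by omega)]
      have hu : ∀ k ≤ m - 1, c₂ k = c'' k := by
        apply huniq''
        · rw [h2lt 0 (by omega)]; exact h0'
        · rw [h2ge (m - 1) (by omega), show m - 1 + 1 = m by omega]; exact hm'
        · refine ⟨?_, ?_, ?_⟩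
          · intro k hk
            rcases Nat.lt_or_ge (k + 1) (a + 1) with h | h
            · rw [h2lt k (by omega), h2lt (k + 1) h]
              exact hpg'.1 k (by omega)
            · rcases Nat.eq_or_lt_of_le h with h' | h'
              · have hka : k = a := by omega
                rw [hka]
                rw [h2lt a (by omega), h2ge (a + 1) (by omega)]
                exact hpg'.2.2 ⟨(a, a + 2), hdiag⟩ hmem
              · rw [h2ge k (by omega), h2ge (k + 1) (by omega)]
                exact hpg'.1 (k + 1) (by omega)
          · rw [h2ge (m - 1) (by omega), show m - 1 + 1 = m by omega, h2lt 0 (by omega)]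
            exact hpg'.2.1
          · intro dd hddm
            have hddE : dd.val ∈ E := (hEM_mem dd).mp hddm
            rw [hEdef, Finset.mem_image] at hddE
            obtain ⟨p, hpE, hval⟩ := hddE
            have hpD : p ∈ T.diags.image Subtype.val := Finset.mem_of_mem_erase hpE
            rw [Finset.mem_image] at hpD
            obtain ⟨d, hdm, hdv⟩ := hpD
            have hne1 := hear d hdm
            have hc2f : ∀ x, x ≠ a + 1 → c₂ (fshift a (a + 2) x) = c' x := by
              intro x hx
              rcases Nat.lt_or_ge x (a + 1) with h | h
              · rw [hfs, if_pos h, h2lt x h]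
              · rw [hfs, if_neg (by omega), h2ge (x - 1) (by omega),
                  show x - 1 + 1 = x by omega]
            rw [← hval]
            show c₂ (fshift a (a + 2) p.1) ≠ c₂ (fshift a (a + 2) p.2)
            rw [hc2f p.1 (by rw [← hdv]; exact hne1.1), hc2f p.2 (by rw [← hdv]; exact hne1.2)]
            have hthis := hpg'.2.2 d hdm
            rw [hdv] at hthis
            exact hthis
      rcases Nat.lt_or_ge j (a + 1) with h | h
      · rw [hclt j h, ← hu j (by omega), h2lt j h]
      · rcases Nat.eq_or_lt_of_le h with h' | h'
        · rw [show j = a + 1 from h'.symm]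
          have e1 : c' a = c'' a := by
            have hk := hu a (by omega)
            rw [h2lt a (by omega)] at hk; exact hk
          have e2 : c' (a + 2) = c'' (a + 1) := by
            have hk := hu (a + 1) (by omega)
            rw [h2ge (a + 1) (by omega)] at hk
            exact hk
          have hx1 : c' (a + 1) ≠ c'' a := by
            rw [← e1]; exact (hpg'.1 a (by omega)).symm
          have hx2 : c' (a + 1) ≠ c'' (a + 1) := by
            rw [← e2]; exact hpg'.1 (a + 1) (by omega)
          rw [hcmid]
          exact third_unique hne'' hx1 hx2 hoth.1 hoth.2
        · rw [hcgt j h']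
          have hk := hu (j - 1) (by omega)
          rw [h2ge (j - 1) (by omega), show j - 1 + 1 = j by omega] at hk
          exact hk

theorem stmt4 (m : ℕ) (hm : 1 ≤ m) (T : Triangulation m) :
    ∃ c : ℕ → P1 (ZMod 2),
      c 0 = ptZero (ZMod 2) ∧ c m = ptInf (ZMod 2) ∧ ProperGraph T c ∧
      ∀ c' : ℕ → P1 (ZMod 2), c' 0 = ptZero (ZMod 2) → c' m = ptInf (ZMod 2) →
        ProperGraph T c' → ∀ i ≤ m, c' i = c i := by
  exact main_aux m hm T
end

section
/- Let y = (y_0,...,y_m) with y_0 = [1:0], y_m = [0:1], y_i ≠ y_{i+1}, and let ij be a diagonal of the (m+1)-gon. Then there exists a triangulation T containing ij such that y properly colors T if and only if ij is valid for y, i.e., y_i ≠ y_j and in each of the two sub-polygons determined by ij the restriction of y takes at least three distinct values. -/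
def ACross' (p q : ℕ × ℕ) : Prop :=
  (p.1 < q.1 ∧ q.1 < p.2 ∧ p.2 < q.2) ∨ (q.1 < p.1 ∧ p.1 < q.2 ∧ q.2 < p.2)

def AGood (N : ℕ) (S : Finset (ℕ × ℕ)) : Prop :=
  (∀ p ∈ S, IsDiag N p) ∧ ∀ p ∈ S, ∀ q ∈ S, ¬ ACross' p q


def vmap (j s k : ℕ) : ℕ := if k ≤ s then j + k else k - s - 1

def rotp (i j s : ℕ) (e : ℕ × ℕ) : ℕ × ℕ :=
  if e.2 ≤ i then (e.1 + s + 1, e.2 + s + 1)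
  else if j ≤ e.1 then (e.1 - j, e.2 - j)
  else (e.2 - j, e.1 + s + 1)

def unrotp (i j s : ℕ) (e : ℕ × ℕ) : ℕ × ℕ :=
  if e.2 ≤ s then (j + e.1, j + e.2)
  else if s + 1 ≤ e.1 then (e.1 - s - 1, e.2 - s - 1)
  else (e.2 - s - 1, j + e.1)

lemma ptZero_ne_ptInf_s7 (F : Type*) [Field F] : ptZero F ≠ ptInf F := by
  intro h
  rw [ptZero, ptInf, Projectivization.mk_eq_mk_iff] at h
  obtain ⟨a, ha⟩ := h
  have h1 := congrArg Prod.fst ha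
  simp [Units.smul_def] at h1

def contrPair (p q : ℕ) (e : ℕ × ℕ) : ℕ × ℕ :=
  (if e.1 ≤ p then e.1 else e.1 - (q - p - 1), if e.2 ≤ p then e.2 else e.2 - (q - p - 1))
def expandPair (k : ℕ) (e : ℕ × ℕ) : ℕ × ℕ :=
  (if e.1 < k then e.1 else e.1 + 1, if e.2 < k then e.2 else e.2 + 1)

lemma contr_shape {N p q a b : ℕ} (hd : p + 2 ≤ q ∧ q ≤ N ∧ ¬(p = 0 ∧ q = N)) (he : a + 2 ≤ b ∧ b ≤ N ∧ ¬(a = 0 ∧ b = N))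
    (hmin : q - p ≤ b - a) (hnc : ¬ ACross' (p, q) (a, b)) (hne : ¬(a = p ∧ b = q)) :
    (a ≤ p ∨ q ≤ a) ∧ (b ≤ p ∨ q ≤ b) := by
  unfold ACross' at hnc; omega

lemma contr_isdiag {N p q a b : ℕ} (hd : p + 2 ≤ q ∧ q ≤ N ∧ ¬(p = 0 ∧ q = N)) (he : a + 2 ≤ b ∧ b ≤ N ∧ ¬(a = 0 ∧ b = N))
    (hsh : (a ≤ p ∨ q ≤ a) ∧ (b ≤ p ∨ q ≤ b)) (hne : ¬(a = p ∧ b = q)) :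
    IsDiag (N - (q - p - 1)) (contrPair p q (a, b)) := by
  unfold IsDiag
  simp only [contrPair]
  split_ifs <;> omega

lemma contr_nocross {N p q a b c d : ℕ} (hd : p + 2 ≤ q ∧ q ≤ N ∧ ¬(p = 0 ∧ q = N)) (h1 : a + 2 ≤ b ∧ b ≤ N ∧ ¬(a = 0 ∧ b = N))
    (h2 : c + 2 ≤ d ∧ d ≤ N ∧ ¬(c = 0 ∧ d = N)) (hs1 : (a ≤ p ∨ q ≤ a) ∧ (b ≤ p ∨ q ≤ b))
    (hs2 : (c ≤ p ∨ q ≤ c) ∧ (d ≤ p ∨ q ≤ d)) (hnc : ¬ ACross' (a, b) (c, d)) :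
    ¬ ACross' (contrPair p q (a, b)) (contrPair p q (c, d)) := by
  intro hc
  unfold ACross' at hnc hc
  simp only [contrPair] at hc
  split_ifs at hc <;> omega

lemma contr_inj {N p q a b c d : ℕ} (hd : p + 2 ≤ q ∧ q ≤ N ∧ ¬(p = 0 ∧ q = N)) (h1 : a + 2 ≤ b ∧ b ≤ N ∧ ¬(a = 0 ∧ b = N))
    (h2 : c + 2 ≤ d ∧ d ≤ N ∧ ¬(c = 0 ∧ d = N)) (hs1 : (a ≤ p ∨ q ≤ a) ∧ (b ≤ p ∨ q ≤ b))
    (hs2 : (c ≤ p ∨ q ≤ c) ∧ (d ≤ p ∨ q ≤ d))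
    (hEq : contrPair p q (a, b) = contrPair p q (c, d)) : a = c ∧ b = d := by
  simp only [contrPair, Prod.mk.injEq] at hEq
  split_ifs at hEq <;> omega

lemma expand_isdiag {N k a b : ℕ} (h : a + 2 ≤ b ∧ b ≤ (N - 1) ∧ ¬(a = 0 ∧ b = (N - 1))) (hk1 : 1 ≤ k)
    (hk2 : k ≤ N - 1) (hN : 3 ≤ N) : IsDiag N (expandPair k (a, b)) := by
  unfold IsDiag
  simp only [expandPair]
  split_ifs <;> first
  | omega
  | exact ⟨by omega, by omega, by simp⟩

lemma expand_nocross {N k a b c d : ℕ} (h1 : a + 2 ≤ b ∧ b ≤ (N - 1) ∧ ¬(a = 0 ∧ b = (N - 1)))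
    (h2 : c + 2 ≤ d ∧ d ≤ (N - 1) ∧ ¬(c = 0 ∧ d = (N - 1))) (hnc : ¬ ACross' (a, b) (c, d)) :
    ¬ ACross' (expandPair k (a, b)) (expandPair k (c, d)) := by
  intro hc
  unfold ACross' at hnc hc
  simp only [expandPair] at hc
  split_ifs at hc <;> omega

lemma expand_nc_ear1 {N k a b : ℕ} (h : a + 2 ≤ b ∧ b ≤ (N - 1) ∧ ¬(a = 0 ∧ b = (N - 1))) :
    ¬ ACross' (k - 1, k + 1) (expandPair k (a, b)) := by
  intro hc
  unfold ACross' at hc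
  simp only [expandPair] at hc
  split_ifs at hc <;> omega

lemma expand_nc_ear2 {N k a b : ℕ} (h : a + 2 ≤ b ∧ b ≤ (N - 1) ∧ ¬(a = 0 ∧ b = (N - 1))) :
    ¬ ACross' (expandPair k (a, b)) (k - 1, k + 1) := by
  intro hc
  unfold ACross' at hc
  simp only [expandPair] at hc
  split_ifs at hc <;> omega

lemma expand_ne_ear {N k a b : ℕ} (h : a + 2 ≤ b ∧ b ≤ (N - 1) ∧ ¬(a = 0 ∧ b = (N - 1))) :
    expandPair k (a, b) ≠ (k - 1, k + 1) := by
  intro hc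
  simp only [expandPair, Prod.mk.injEq] at hc
  split_ifs at hc <;> omega

lemma expand_inj {k a b c d : ℕ} (hEq : expandPair k (a, b) = expandPair k (c, d)) :
    a = c ∧ b = d := by
  simp only [expandPair, Prod.mk.injEq] at hEq
  split_ifs at hEq <;> omega

section Kern2
variable {m i j a b c d : ℕ}

lemma shape_of (hdd : i + 2 ≤ j ∧ j ≤ m ∧ ¬(i = 0 ∧ j = m))
    (hab : a + 2 ≤ b ∧ b ≤ m ∧ ¬(a = 0 ∧ b = m))
    (hlt : a < i ∨ j < b) (hnc : ¬ ACross' (i, j) (a, b)) :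
    b ≤ i ∨ j ≤ a ∨ (a ≤ i ∧ j ≤ b) := by
  unfold ACross' at hnc; omega

lemma rotp_isdiag (hdd : i + 2 ≤ j ∧ j ≤ m ∧ ¬(i = 0 ∧ j = m))
    (hab : a + 2 ≤ b ∧ b ≤ m ∧ ¬(a = 0 ∧ b = m))
    (hsh : b ≤ i ∨ j ≤ a ∨ (a ≤ i ∧ j ≤ b)) (hne : ¬(a = i ∧ b = j)) :
    IsDiag (m - j + i + 1) (rotp i j (m - j) (a, b)) := by
  unfold IsDiag
  simp only [rotp]
  split_ifs <;> first
  | omega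
  | exact ⟨by omega, by omega, by simp⟩

lemma rotp_nocross (hdd : i + 2 ≤ j ∧ j ≤ m ∧ ¬(i = 0 ∧ j = m))
    (hab : a + 2 ≤ b ∧ b ≤ m ∧ ¬(a = 0 ∧ b = m))
    (hcd : c + 2 ≤ d ∧ d ≤ m ∧ ¬(c = 0 ∧ d = m))
    (hsh1 : b ≤ i ∨ j ≤ a ∨ (a ≤ i ∧ j ≤ b))
    (hsh2 : d ≤ i ∨ j ≤ c ∨ (c ≤ i ∧ j ≤ d))
    (hnc : ¬ ACross' (a, b) (c, d)) :
    ¬ ACross' (rotp i j (m - j) (a, b)) (rotp i j (m - j) (c, d)) := by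
  intro hc
  unfold ACross' at hnc hc
  simp only [rotp] at hc
  split_ifs at hc <;> omega

lemma rotp_inj (hdd : i + 2 ≤ j ∧ j ≤ m ∧ ¬(i = 0 ∧ j = m))
    (hab : a + 2 ≤ b ∧ b ≤ m ∧ ¬(a = 0 ∧ b = m))
    (hcd : c + 2 ≤ d ∧ d ≤ m ∧ ¬(c = 0 ∧ d = m))
    (hsh1 : b ≤ i ∨ j ≤ a ∨ (a ≤ i ∧ j ≤ b))
    (hsh2 : d ≤ i ∨ j ≤ c ∨ (c ≤ i ∧ j ≤ d))
    (hEq : rotp i j (m - j) (a, b) = rotp i j (m - j) (c, d)) : a = c ∧ b = d := by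
  simp only [rotp] at hEq
  split_ifs at hEq <;> simp only [Prod.mk.injEq] at hEq <;> omega

lemma unrotp_isdiag (hdd : i + 2 ≤ j ∧ j ≤ m ∧ ¬(i = 0 ∧ j = m))
    (hab : a + 2 ≤ b ∧ b ≤ m - j + i + 1 ∧ ¬(a = 0 ∧ b = m - j + i + 1)) :
    IsDiag m (unrotp i j (m - j) (a, b)) := by
  unfold IsDiag
  simp only [unrotp]
  split_ifs <;> first
  | omega
  | exact ⟨by omega, by omega, by simp⟩
  | exact ⟨by omega, by omega, by omega⟩

lemma unrotp_nocross (hdd : i + 2 ≤ j ∧ j ≤ m ∧ ¬(i = 0 ∧ j = m))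
    (hab : a + 2 ≤ b ∧ b ≤ m - j + i + 1 ∧ ¬(a = 0 ∧ b = m - j + i + 1))
    (hcd : c + 2 ≤ d ∧ d ≤ m - j + i + 1 ∧ ¬(c = 0 ∧ d = m - j + i + 1))
    (hnc : ¬ ACross' (a, b) (c, d)) :
    ¬ ACross' (unrotp i j (m - j) (a, b)) (unrotp i j (m - j) (c, d)) := by
  intro hc
  unfold ACross' at hnc hc
  simp only [unrotp] at hc
  split_ifs at hc <;> omega

lemma unrotp_inj (hdd : i + 2 ≤ j ∧ j ≤ m ∧ ¬(i = 0 ∧ j = m))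
    (hab : a + 2 ≤ b ∧ b ≤ m - j + i + 1 ∧ ¬(a = 0 ∧ b = m - j + i + 1))
    (hcd : c + 2 ≤ d ∧ d ≤ m - j + i + 1 ∧ ¬(c = 0 ∧ d = m - j + i + 1))
    (hEq : unrotp i j (m - j) (a, b) = unrotp i j (m - j) (c, d)) : a = c ∧ b = d := by
  simp only [unrotp] at hEq
  split_ifs at hEq <;> simp only [Prod.mk.injEq] at hEq <;> omega

lemma unrotp_ne_d (hdd : i + 2 ≤ j ∧ j ≤ m ∧ ¬(i = 0 ∧ j = m))
    (hab : a + 2 ≤ b ∧ b ≤ m - j + i + 1 ∧ ¬(a = 0 ∧ b = m - j + i + 1)) :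
    unrotp i j (m - j) (a, b) ≠ (i, j) := by
  intro hc
  simp only [unrotp] at hc
  split_ifs at hc <;> simp only [Prod.mk.injEq] at hc <;> omega

lemma plus_isdiag (hdd : i + 2 ≤ j ∧ j ≤ m ∧ ¬(i = 0 ∧ j = m))
    (hab : a + 2 ≤ b ∧ b ≤ j - i ∧ ¬(a = 0 ∧ b = j - i)) :
    IsDiag m (i + a, i + b) := by
  unfold IsDiag; exact ⟨by omega, by omega, by omega⟩

lemma plus_ne_d (hdd : i + 2 ≤ j ∧ j ≤ m ∧ ¬(i = 0 ∧ j = m))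
    (hab : a + 2 ≤ b ∧ b ≤ j - i ∧ ¬(a = 0 ∧ b = j - i)) :
    (i + a, i + b) ≠ (i, j) := by
  intro hc
  simp only [Prod.mk.injEq] at hc
  omega

lemma plus_nocross (hnc : ¬ ACross' (a, b) (c, d)) :
    ¬ ACross' (i + a, i + b) (i + c, i + d) := by
  intro hc
  unfold ACross' at hnc hc
  omega

lemma nc_d_plus (hdd : i + 2 ≤ j ∧ j ≤ m ∧ ¬(i = 0 ∧ j = m))
    (hab : a + 2 ≤ b ∧ b ≤ j - i ∧ ¬(a = 0 ∧ b = j - i)) :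
    ¬ ACross' (i, j) (i + a, i + b) ∧ ¬ ACross' (i + a, i + b) (i, j) := by
  unfold ACross'; omega

lemma nc_d_unrotp (hdd : i + 2 ≤ j ∧ j ≤ m ∧ ¬(i = 0 ∧ j = m))
    (hab : a + 2 ≤ b ∧ b ≤ m - j + i + 1 ∧ ¬(a = 0 ∧ b = m - j + i + 1)) :
    ¬ ACross' (i, j) (unrotp i j (m - j) (a, b)) ∧
    ¬ ACross' (unrotp i j (m - j) (a, b)) (i, j) := by
  unfold ACross'
  simp only [unrotp]
  split_ifs <;> omega

lemma nc_plus_unrotp (hdd : i + 2 ≤ j ∧ j ≤ m ∧ ¬(i = 0 ∧ j = m))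
    (hab : a + 2 ≤ b ∧ b ≤ j - i ∧ ¬(a = 0 ∧ b = j - i))
    (hcd : c + 2 ≤ d ∧ d ≤ m - j + i + 1 ∧ ¬(c = 0 ∧ d = m - j + i + 1)) :
    ¬ ACross' (i + a, i + b) (unrotp i j (m - j) (c, d)) ∧
    ¬ ACross' (unrotp i j (m - j) (c, d)) (i + a, i + b) := by
  unfold ACross'
  simp only [unrotp]
  split_ifs <;> omega

lemma ne_plus_unrotp (hdd : i + 2 ≤ j ∧ j ≤ m ∧ ¬(i = 0 ∧ j = m))
    (hab : a + 2 ≤ b ∧ b ≤ j - i ∧ ¬(a = 0 ∧ b = j - i))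
    (hcd : c + 2 ≤ d ∧ d ≤ m - j + i + 1 ∧ ¬(c = 0 ∧ d = m - j + i + 1)) :
    (i + a, i + b) ≠ unrotp i j (m - j) (c, d) := by
  intro hc
  simp only [unrotp] at hc
  split_ifs at hc <;> simp only [Prod.mk.injEq] at hc <;> omega

lemma sub_isdiag (hdd : i + 2 ≤ j ∧ j ≤ m ∧ ¬(i = 0 ∧ j = m))
    (hab : a + 2 ≤ b ∧ b ≤ m ∧ ¬(a = 0 ∧ b = m))
    (h1 : i ≤ a) (h2 : b ≤ j) (hne : ¬(a = i ∧ b = j)) :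
    IsDiag (j - i) (a - i, b - i) := by
  unfold IsDiag; exact ⟨by omega, by omega, by omega⟩

lemma sub_nocross (h1 : i ≤ a) (h2 : i ≤ c) (hnc : ¬ ACross' (a, b) (c, d))
    (hab : a + 2 ≤ b) (hcd : c + 2 ≤ d) :
    ¬ ACross' (a - i, b - i) (c - i, d - i) := by
  intro hc
  unfold ACross' at hnc hc
  omega

end Kern2

lemma agood_card_le : ∀ N : ℕ, ∀ S : Finset (ℕ × ℕ), AGood N S → S.card ≤ N - 2 := by
  intro N
  induction N using Nat.strong_induction_on with
  | _ N IH =>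
  intro S hS
  rcases S.eq_empty_or_nonempty with rfl | hne
  · simp
  obtain ⟨⟨p, q⟩, hpq, hmin⟩ := S.exists_min_image (fun e => e.2 - e.1) hne
  have hd : p + 2 ≤ q ∧ q ≤ N ∧ ¬(p = 0 ∧ q = N) := hS.1 _ hpq
  have hfact : ∀ e ∈ S.erase (p, q),
      (e.1 + 2 ≤ e.2 ∧ e.2 ≤ N ∧ ¬(e.1 = 0 ∧ e.2 = N)) ∧
      ((e.1 ≤ p ∨ q ≤ e.1) ∧ (e.2 ≤ p ∨ q ≤ e.2)) := by
    rintro ⟨a, b⟩ he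
    have he' := Finset.mem_of_mem_erase he
    have hne' := Finset.ne_of_mem_erase he
    have h1 : a + 2 ≤ b ∧ b ≤ N ∧ ¬(a = 0 ∧ b = N) := hS.1 _ he'
    have h4 : ¬(a = p ∧ b = q) := fun h => hne' (Prod.ext h.1 h.2)
    exact ⟨h1, contr_shape hd h1 (hmin _ he') (hS.2 _ hpq _ he') h4⟩
  have hinj : Set.InjOn (contrPair p q) (S.erase (p, q)) := by
    rintro ⟨a, b⟩ ha ⟨c, dd⟩ hb hab
    obtain ⟨h1, hs1⟩ := hfact _ ha
    obtain ⟨h2, hs2⟩ := hfact _ hb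
    have h := contr_inj hd h1 h2 hs1 hs2 hab
    exact Prod.ext h.1 h.2
  have hgood : AGood (N - (q - p - 1)) ((S.erase (p, q)).image (contrPair p q)) := by
    constructor
    · rintro e he
      obtain ⟨⟨a, b⟩, ha, rfl⟩ := Finset.mem_image.1 he
      obtain ⟨h1, hs1⟩ := hfact _ ha
      have hne' := Finset.ne_of_mem_erase ha
      exact contr_isdiag hd h1 hs1 (fun h => hne' (Prod.ext h.1 h.2))
    · rintro e1 he1 e2 he2
      obtain ⟨⟨a, b⟩, ha, rfl⟩ := Finset.mem_image.1 he1
      obtain ⟨⟨c, dd⟩, hb, rfl⟩ := Finset.mem_image.1 he2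
      obtain ⟨h1, hs1⟩ := hfact _ ha
      obtain ⟨h2, hs2⟩ := hfact _ hb
      exact contr_nocross hd h1 h2 hs1 hs2
        (hS.2 _ (Finset.mem_of_mem_erase ha) _ (Finset.mem_of_mem_erase hb))
  have hle := IH (N - (q - p - 1)) (by omega) _ hgood
  have hce : (S.erase (p, q)).card = S.card - 1 := Finset.card_erase_of_mem hpq
  have hpos : 0 < S.card := Finset.card_pos.2 hne
  rw [Finset.card_image_of_injOn hinj, hce] at hle
  omega

lemma exists_ear_s7 {N : ℕ} {S : Finset (ℕ × ℕ)} (h3 : 3 ≤ N) (hS : AGood N S)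
    (hcard : S.card = N - 2) : ∃ k, k + 2 ≤ N ∧ (k, k + 2) ∈ S := by
  have hne : S.Nonempty := by
    rw [← Finset.card_pos, hcard]; omega
  obtain ⟨⟨p, q⟩, hpq, hmin⟩ := S.exists_min_image (fun e => e.2 - e.1) hne
  have hd : p + 2 ≤ q ∧ q ≤ N ∧ ¬(p = 0 ∧ q = N) := hS.1 _ hpq
  have hfact : ∀ e ∈ S.erase (p, q),
      (e.1 + 2 ≤ e.2 ∧ e.2 ≤ N ∧ ¬(e.1 = 0 ∧ e.2 = N)) ∧
      ((e.1 ≤ p ∨ q ≤ e.1) ∧ (e.2 ≤ p ∨ q ≤ e.2)) := by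
    rintro ⟨a, b⟩ he
    have he' := Finset.mem_of_mem_erase he
    have hne' := Finset.ne_of_mem_erase he
    have h1 : a + 2 ≤ b ∧ b ≤ N ∧ ¬(a = 0 ∧ b = N) := hS.1 _ he'
    have h4 : ¬(a = p ∧ b = q) := fun h => hne' (Prod.ext h.1 h.2)
    exact ⟨h1, contr_shape hd h1 (hmin _ he') (hS.2 _ hpq _ he') h4⟩
  have hinj : Set.InjOn (contrPair p q) (S.erase (p, q)) := by
    rintro ⟨a, b⟩ ha ⟨c, dd⟩ hb hab
    obtain ⟨h1, hs1⟩ := hfact _ ha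
    obtain ⟨h2, hs2⟩ := hfact _ hb
    have h := contr_inj hd h1 h2 hs1 hs2 hab
    exact Prod.ext h.1 h.2
  have hgood : AGood (N - (q - p - 1)) ((S.erase (p, q)).image (contrPair p q)) := by
    constructor
    · rintro e he
      obtain ⟨⟨a, b⟩, ha, rfl⟩ := Finset.mem_image.1 he
      obtain ⟨h1, hs1⟩ := hfact _ ha
      have hne' := Finset.ne_of_mem_erase ha
      exact contr_isdiag hd h1 hs1 (fun h => hne' (Prod.ext h.1 h.2))
    · rintro e1 he1 e2 he2
      obtain ⟨⟨a, b⟩, ha, rfl⟩ := Finset.mem_image.1 he1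
      obtain ⟨⟨c, dd⟩, hb, rfl⟩ := Finset.mem_image.1 he2
      obtain ⟨h1, hs1⟩ := hfact _ ha
      obtain ⟨h2, hs2⟩ := hfact _ hb
      exact contr_nocross hd h1 h2 hs1 hs2
        (hS.2 _ (Finset.mem_of_mem_erase ha) _ (Finset.mem_of_mem_erase hb))
  have hle := agood_card_le _ _ hgood
  rw [Finset.card_image_of_injOn hinj, Finset.card_erase_of_mem hpq, hcard] at hle
  have hq : q = p + 2 := by omega
  exact ⟨p, by omega, by rw [← hq]; exact hpq⟩

lemma three_le_card_of_mem {α : Type*} [DecidableEq α] {a b c : α} {s : Finset α}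
    (ha : a ∈ s) (hb : b ∈ s) (hc : c ∈ s) (hab : a ≠ b) (hac : a ≠ c) (hbc : b ≠ c) :
    3 ≤ s.card := by
  have hsub : ({a, b, c} : Finset α) ⊆ s := by
    intro x hx
    simp only [Finset.mem_insert, Finset.mem_singleton] at hx
    rcases hx with rfl | rfl | rfl <;> assumption
  have h3 : ({a, b, c} : Finset α).card = 3 := by
    rw [Finset.card_eq_three]; exact ⟨a, b, c, hab, hac, hbc, rfl⟩
  rw [← h3]; exact Finset.card_le_card hsub

lemma three_vals {α : Type*} [DecidableEq α] {N : ℕ} {S : Finset (ℕ × ℕ)} {z : ℕ → α}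
    (h2 : 2 ≤ N) (hS : AGood N S) (hcard : S.card = N - 2)
    (hside : ∀ k < N, z k ≠ z (k + 1)) (hwrap : z N ≠ z 0)
    (hdiag : ∀ e ∈ S, z e.1 ≠ z e.2) :
    3 ≤ ((Finset.Icc 0 N).image z).card := by
  rcases eq_or_lt_of_le h2 with hN | hN
  · apply three_le_card_of_mem (a := z 0) (b := z 1) (c := z 2)
    · exact Finset.mem_image_of_mem z (by simp)
    · exact Finset.mem_image_of_mem z (Finset.mem_Icc.2 ⟨by omega, by omega⟩)
    · exact Finset.mem_image_of_mem z (Finset.mem_Icc.2 ⟨by omega, by omega⟩)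
    · exact hside 0 (by omega)
    · rw [← hN] at hwrap; exact fun h => hwrap h.symm
    · exact hside 1 (by omega)
  · obtain ⟨k, hk, hkS⟩ := exists_ear_s7 hN hS hcard
    apply three_le_card_of_mem (a := z k) (b := z (k+1)) (c := z (k+2))
    · exact Finset.mem_image_of_mem z (Finset.mem_Icc.2 ⟨by omega, by omega⟩)
    · exact Finset.mem_image_of_mem z (Finset.mem_Icc.2 ⟨by omega, by omega⟩)
    · exact Finset.mem_image_of_mem z (Finset.mem_Icc.2 ⟨by omega, by omega⟩)
    · exact hside k (by omega)
    · exact hdiag _ hkS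
    · exact hside (k+1) (by omega)

lemma four_le_card_of_mem {α : Type*} [DecidableEq α] {a b c d : α} {s : Finset α}
    (ha : a ∈ s) (hb : b ∈ s) (hc : c ∈ s) (hd : d ∈ s)
    (hab : a ≠ b) (hac : a ≠ c) (had : a ≠ d) (hbc : b ≠ c) (hbd : b ≠ d) (hcd : c ≠ d) :
    4 ≤ s.card := by
  have hsub : ({a, b, c, d} : Finset α) ⊆ s := by
    intro x hx
    simp only [Finset.mem_insert, Finset.mem_singleton] at hx
    rcases hx with rfl | rfl | rfl | rfl <;> assumption
  have h4 : ({a, b, c, d} : Finset α).card = 4 := by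
    rw [Finset.card_insert_of_notMem (by simp [hab, hac, had])]
    have h3 : ({b, c, d} : Finset α).card = 3 := Finset.card_eq_three.2 ⟨b, c, d, hbc, hbd, hcd, rfl⟩
    omega
  rw [← h4]; exact Finset.card_le_card hsub


lemma exists_good {α : Type*} [DecidableEq α] :
    ∀ N : ℕ, 2 ≤ N → ∀ z : ℕ → α,
    (∀ k < N, z k ≠ z (k + 1)) → z N ≠ z 0 →
    (N = 2 ∨ 3 ≤ ((Finset.Icc 0 N).image z).card) →
    ∃ S : Finset (ℕ × ℕ), AGood N S ∧ S.card = N - 2 ∧ ∀ e ∈ S, z e.1 ≠ z e.2 := by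
  intro N
  induction N using Nat.strong_induction_on with
  | _ N IH =>
  intro hN z hside hwrap hvals
  rcases eq_or_lt_of_le hN with hN2 | hN3
  · exact ⟨∅, ⟨by simp, by simp⟩, by rw [Finset.card_empty]; omega, by simp⟩
  have hv3 : 3 ≤ ((Finset.Icc 0 N).image z).card := by
    rcases hvals with h | h
    · omega
    · exact h
  have claim1 : ∃ k, 1 ≤ k ∧ k ≤ N - 1 ∧ z (k - 1) ≠ z (k + 1) := by
    by_contra hcon
    push_neg at hcon
    have halt : ∀ t, t ≤ N → z t = (if t % 2 = 0 then z 0 else z 1) := by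
      intro t
      induction t using Nat.strong_induction_on with
      | _ t IHt =>
      intro ht
      rcases Nat.lt_or_ge t 2 with h2 | h2
      · interval_cases t <;> simp
      · have he := hcon (t - 1) (by omega) (by omega)
        rw [show t - 1 - 1 = t - 2 by omega, show t - 1 + 1 = t by omega] at he
        rw [← he, IHt (t - 2) (by omega) (by omega), show (t - 2) % 2 = t % 2 by omega]
    have hsub : (Finset.Icc 0 N).image z ⊆ {z 0, z 1} := by
      intro v hv
      obtain ⟨t, ht, rfl⟩ := Finset.mem_image.1 hv
      rw [halt t (Finset.mem_Icc.1 ht).2]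
      split_ifs <;> simp
    have h1 := Finset.card_le_card hsub
    have h2 : ({z 0, z 1} : Finset α).card ≤ 2 :=
      (Finset.card_insert_le _ _).trans (by simp)
    omega
  have hdupcard : ∀ k, (∃ t ≤ N, t ≠ k ∧ z t = z k) →
      3 ≤ (((Finset.Icc 0 N).erase k).image z).card := by
    rintro k ⟨t, ht, htk, hzt⟩
    refine le_trans hv3 (Finset.card_le_card ?_)
    intro v hv
    obtain ⟨u, hu, rfl⟩ := Finset.mem_image.1 hv
    by_cases huk : u = k
    · subst huk
      exact Finset.mem_image.2 ⟨t, Finset.mem_erase.2 ⟨htk, Finset.mem_Icc.2 ⟨by omega, ht⟩⟩, hzt⟩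
    · exact Finset.mem_image.2 ⟨u, Finset.mem_erase.2 ⟨huk, hu⟩, rfl⟩
  have claim2 : ∃ k, 1 ≤ k ∧ k ≤ N - 1 ∧ z (k - 1) ≠ z (k + 1) ∧
      (N = 3 ∨ 3 ≤ (((Finset.Icc 0 N).erase k).image z).card) := by
    obtain ⟨k0, hk01, hk02, hk0⟩ := claim1
    rcases eq_or_lt_of_le (show 3 ≤ N by omega) with h3 | h4
    · exact ⟨k0, hk01, hk02, hk0, Or.inl h3.symm⟩
    by_cases h4v : 4 ≤ ((Finset.Icc 0 N).image z).card
    · refine ⟨k0, hk01, hk02, hk0, Or.inr ?_⟩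
      have hsub : (Finset.Icc 0 N).image z ⊆
          insert (z k0) (((Finset.Icc 0 N).erase k0).image z) := by
        intro v hv
        obtain ⟨t, ht, rfl⟩ := Finset.mem_image.1 hv
        by_cases htk : t = k0
        · subst htk; exact Finset.mem_insert_self _ _
        · exact Finset.mem_insert_of_mem
            (Finset.mem_image.2 ⟨t, Finset.mem_erase.2 ⟨htk, ht⟩, rfl⟩)
      have h1 := Finset.card_le_card hsub
      have h2 := Finset.card_insert_le (z k0) (((Finset.Icc 0 N).erase k0).image z)
      omega
    by_cases hdup0 : ∃ t ≤ N, t ≠ k0 ∧ z t = z k0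
    · exact ⟨k0, hk01, hk02, hk0, Or.inr (hdupcard _ hdup0)⟩
    push_neg at hdup0
    by_cases hk0big : 2 ≤ k0
    · -- k1 = k0 - 1
      have hk1n : z (k0 - 1 - 1) ≠ z (k0 - 1 + 1) := by
        rw [show k0 - 1 + 1 = k0 by omega]
        exact hdup0 (k0 - 1 - 1) (by omega) (by omega)
      by_cases hdup1 : ∃ t ≤ N, t ≠ k0 - 1 ∧ z t = z (k0 - 1)
      · exact ⟨k0 - 1, by omega, by omega, hk1n, Or.inr (hdupcard _ hdup1)⟩
      push_neg at hdup1
      exfalso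
      -- u = k0 - 1, u + 1 = k0 both unique
      set a := if 2 ≤ k0 - 1 then 0 else k0 + 1 with hadef
      have haf : a + 1 ≤ N ∧ a ≠ k0 - 1 ∧ a ≠ k0 ∧ a + 1 ≠ k0 - 1 ∧ a + 1 ≠ k0 := by
        simp only [hadef]; split_ifs <;> omega
      have hmem : ∀ t ≤ N, z t ∈ (Finset.Icc 0 N).image z := fun t ht =>
        Finset.mem_image_of_mem z (Finset.mem_Icc.2 ⟨by omega, ht⟩)
      have h4c : 4 ≤ ((Finset.Icc 0 N).image z).card := by
        refine four_le_card_of_mem (hmem (k0 - 1) (by omega)) (hmem k0 (by omega))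
          (hmem a (by omega)) (hmem (a + 1) (by omega)) ?_ ?_ ?_ ?_ ?_ ?_
        · rw [show k0 = k0 - 1 + 1 by omega]; exact hside (k0 - 1) (by omega)
        · exact fun h => hdup1 a (by omega) haf.2.1 h.symm
        · exact fun h => hdup1 (a + 1) (by omega) haf.2.2.2.1 h.symm
        · exact fun h => hdup0 a (by omega) haf.2.2.1 h.symm
        · exact fun h => hdup0 (a + 1) (by omega) haf.2.2.2.2 h.symm
        · exact hside a (by omega)
      omega
    · -- k0 = 1, k1 = 2
      have hk0e : k0 = 1 := by omega
      subst hk0e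
      have hk1n : z (2 - 1) ≠ z (2 + 1) := by
        exact fun h => hdup0 3 (by omega) (by omega) h.symm
      by_cases hdup1 : ∃ t ≤ N, t ≠ 2 ∧ z t = z 2
      · exact ⟨2, by omega, by omega, hk1n, Or.inr (hdupcard _ hdup1)⟩
      push_neg at hdup1
      exfalso
      have hmem : ∀ t ≤ N, z t ∈ (Finset.Icc 0 N).image z := fun t ht =>
        Finset.mem_image_of_mem z (Finset.mem_Icc.2 ⟨by omega, ht⟩)
      have h4c : 4 ≤ ((Finset.Icc 0 N).image z).card := by
        refine four_le_card_of_mem (hmem 1 (by omega)) (hmem 2 (by omega))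
          (hmem 3 (by omega)) (hmem 4 (by omega)) ?_ ?_ ?_ ?_ ?_ ?_
        · exact hside 1 (by omega)
        · exact fun h => hdup0 3 (by omega) (by omega) h.symm
        · exact fun h => hdup0 4 (by omega) (by omega) h.symm
        · exact fun h => hdup1 3 (by omega) (by omega) h.symm
        · exact fun h => hdup1 4 (by omega) (by omega) h.symm
        · exact hside 3 (by omega)
      omega
  obtain ⟨k, hk1, hk2, hkz, hkv⟩ := claim2
  set z' : ℕ → α := fun t => if t < k then z t else z (t + 1) with hz'
  have hside' : ∀ t < N - 1, z' t ≠ z' (t + 1) := by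
    intro t ht
    simp only [hz']
    split_ifs with h1 h2 h2
    · exact hside t (by omega)
    · rw [show t = k - 1 by omega]
      rw [show k - 1 + 1 + 1 = k + 1 by omega]
      exact hkz
    · omega
    · exact hside (t + 1) (by omega)
  have hwrap' : z' (N - 1) ≠ z' 0 := by
    simp only [hz']
    rw [if_neg (by omega), if_pos (by omega), show N - 1 + 1 = N by omega]
    exact hwrap
  have himg : (Finset.Icc 0 (N - 1)).image z' = ((Finset.Icc 0 N).erase k).image z := by
    ext v
    simp only [Finset.mem_image, Finset.mem_erase, Finset.mem_Icc]
    constructor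
    · rintro ⟨t, ⟨-, ht⟩, rfl⟩
      by_cases h : t < k
      · exact ⟨t, ⟨by omega, by omega, by omega⟩, by simp [hz', h]⟩
      · exact ⟨t + 1, ⟨by omega, by omega, by omega⟩, by simp [hz', h]⟩
    · rintro ⟨t, ⟨htk, -, ht⟩, rfl⟩
      by_cases h : t < k
      · exact ⟨t, ⟨by omega, by omega⟩, by simp [hz', h]⟩
      · refine ⟨t - 1, ⟨by omega, by omega⟩, ?_⟩
        simp [hz', show ¬(t - 1 < k) by omega, show t - 1 + 1 = t by omega]
  have hvals' : N - 1 = 2 ∨ 3 ≤ ((Finset.Icc 0 (N - 1)).image z').card := by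
    rcases hkv with h | h
    · left; omega
    · right; rw [himg]; exact h
  obtain ⟨S', hgood', hcard', hdiag'⟩ := IH (N - 1) (by omega) (by omega) z' hside' hwrap' hvals'
  have hfd : ∀ e ∈ S', e.1 + 2 ≤ e.2 ∧ e.2 ≤ N - 1 ∧ ¬(e.1 = 0 ∧ e.2 = N - 1) := hgood'.1
  have hzf : ∀ t : ℕ, z (if t < k then t else t + 1) = z' t := by
    intro t; simp only [hz']; split_ifs <;> rfl
  refine ⟨insert (k - 1, k + 1) (S'.image (expandPair k)), ⟨?_, ?_⟩, ?_, ?_⟩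
  · intro e he
    rcases Finset.mem_insert.1 he with rfl | he
    · unfold IsDiag; exact ⟨by omega, by omega, by omega⟩
    · obtain ⟨⟨a, b⟩, ha, rfl⟩ := Finset.mem_image.1 he
      exact expand_isdiag (hfd _ ha) hk1 hk2 (by omega)
  · intro e1 he1 e2 he2
    rcases Finset.mem_insert.1 he1 with rfl | he1 <;> rcases Finset.mem_insert.1 he2 with rfl | he2
    · intro hc; unfold ACross' at hc; omega
    · obtain ⟨⟨a, b⟩, ha, rfl⟩ := Finset.mem_image.1 he2
      exact expand_nc_ear1 (hfd _ ha)
    · obtain ⟨⟨a, b⟩, ha, rfl⟩ := Finset.mem_image.1 he1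
      exact expand_nc_ear2 (hfd _ ha)
    · obtain ⟨⟨a, b⟩, ha, rfl⟩ := Finset.mem_image.1 he1
      obtain ⟨⟨c, d⟩, hcm, rfl⟩ := Finset.mem_image.1 he2
      exact expand_nocross (hfd _ ha) (hfd _ hcm) (hgood'.2 _ ha _ hcm)
  · have hnotmem : (k - 1, k + 1) ∉ S'.image (expandPair k) := by
      intro h
      obtain ⟨⟨a, b⟩, ha, hEq⟩ := Finset.mem_image.1 h
      exact expand_ne_ear (hfd _ ha) hEq
    have hinj : Set.InjOn (expandPair k) S' := by
      rintro ⟨a, b⟩ _ ⟨c, d⟩ _ hEq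
      have h := expand_inj hEq
      exact Prod.ext h.1 h.2
    rw [Finset.card_insert_of_notMem hnotmem, Finset.card_image_of_injOn hinj, hcard']
    omega
  · intro e he
    rcases Finset.mem_insert.1 he with rfl | he
    · exact hkz
    · obtain ⟨⟨a, b⟩, ha, rfl⟩ := Finset.mem_image.1 he
      have e1 : z (expandPair k (a, b)).1 = z' a := hzf a
      have e2 : z (expandPair k (a, b)).2 = z' b := hzf b
      rw [e1, e2]
      exact hdiag' _ ha


theorem stmt7 (F : Type*) [Field F] (m : ℕ) (y : ℕ → P1 F)
    (h0 : y 0 = ptZero F) (hlast : y m = ptInf F) (hadj : ∀ i < m, y i ≠ y (i + 1))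
    (d : Diagonal m) :
    (∃ T : Triangulation m, d ∈ T.diags ∧ ProperDiags T y) ↔ ValidDiag F m y d := by
  classical
  obtain ⟨⟨i, j⟩, hdij⟩ := d
  have hdd : i + 2 ≤ j ∧ j ≤ m ∧ ¬(i = 0 ∧ j = m) := hdij
  obtain ⟨hdA, hdB, hdC⟩ := hdd
  have hdd : i + 2 ≤ j ∧ j ≤ m ∧ ¬(i = 0 ∧ j = m) := ⟨hdA, hdB, hdC⟩
  have hside1 : ∀ k < j - i, y (i + k) ≠ y (i + (k + 1)) := by
    intro k hk
    have h := hadj (i + k) (by omega)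
    rwa [show i + k + 1 = i + (k + 1) by omega] at h
  have hz2i : ∀ t, t ≤ i → y (vmap j (m - j) (t + (m - j) + 1)) = y t := by
    intro t ht
    simp only [vmap]
    rw [if_neg (by omega)]
    exact congrArg y (by omega)
  have hz2j : ∀ t, j ≤ t → t ≤ m → y (vmap j (m - j) (t - j)) = y t := by
    intro t ht1 ht2
    simp only [vmap]
    rw [if_pos (by omega)]
    exact congrArg y (by omega)
  have hside2 : ∀ k < m - j + i + 1, y (vmap j (m - j) k) ≠ y (vmap j (m - j) (k + 1)) := by
    intro k hk
    simp only [vmap]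
    split_ifs with h1 h2 h2
    · have h := hadj (j + k) (by omega)
      rwa [show j + k + 1 = j + (k + 1) by omega] at h
    · rw [show j + k = m by omega, show k + 1 - (m - j) - 1 = 0 by omega, hlast, h0]
      exact fun h => ptZero_ne_ptInf_s7 F h.symm
    · exact absurd h2 (by omega)
    · have h := hadj (k - (m - j) - 1) (by omega)
      rwa [show k - (m - j) - 1 + 1 = k + 1 - (m - j) - 1 by omega] at h
  have h2N : y (vmap j (m - j) (m - j + i + 1)) = y i := by
    simp only [vmap]; rw [if_neg (by omega)]; exact congrArg y (by omega)
  have h20 : y (vmap j (m - j) 0) = y j := by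
    simp only [vmap]; rw [if_pos (by omega)]; exact congrArg y (by omega)
  have h1N : y (i + (j - i)) = y j := congrArg y (by omega)
  have h10 : y (i + 0) = y i := congrArg y (by omega)
  have himg1 : (Finset.Icc 0 (j - i)).image (fun k => y (i + k)) = (Finset.Icc i j).image y := by
    ext v
    simp only [Finset.mem_image, Finset.mem_Icc]
    constructor
    · rintro ⟨k, hk, rfl⟩
      exact ⟨i + k, ⟨by omega, by omega⟩, rfl⟩
    · rintro ⟨t, ht, rfl⟩
      exact ⟨t - i, ⟨by omega, by omega⟩, congrArg y (by omega)⟩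
  have himg2 : (Finset.Icc 0 (m - j + i + 1)).image (fun k => y (vmap j (m - j) k)) =
      (Finset.Icc 0 i ∪ Finset.Icc j m).image y := by
    ext v
    simp only [Finset.mem_image, Finset.mem_Icc, Finset.mem_union]
    constructor
    · rintro ⟨k, hk, rfl⟩
      by_cases h : k ≤ m - j
      · refine ⟨j + k, Or.inr ⟨by omega, by omega⟩, ?_⟩
        simp only [vmap]; rw [if_pos h]
      · refine ⟨k - (m - j) - 1, Or.inl ⟨by omega, by omega⟩, ?_⟩
        simp only [vmap]; rw [if_neg h]
    · rintro ⟨t, ht | ht, rfl⟩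
      · exact ⟨t + (m - j) + 1, ⟨by omega, by omega⟩, hz2i t ht.2⟩
      · exact ⟨t - j, ⟨by omega, by omega⟩, hz2j t ht.1 ht.2⟩
  have hn1 : (y '' Set.Icc i j).ncard = ((Finset.Icc i j).image y).card := by
    rw [← Finset.coe_Icc, ← Finset.coe_image, Set.ncard_coe_finset]
  have hn2 : (y '' (Set.Icc 0 i ∪ Set.Icc j m)).ncard =
      ((Finset.Icc 0 i ∪ Finset.Icc j m).image y).card := by
    rw [← Finset.coe_Icc, ← Finset.coe_Icc, ← Finset.coe_union, ← Finset.coe_image,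
      Set.ncard_coe_finset]
  constructor
  · rintro ⟨T, hdT, hPD⟩
    have hij : y i ≠ y j := hPD _ hdT
    set P : Diagonal m → Prop := fun e => i ≤ e.val.1 ∧ e.val.2 ≤ j ∧ e ≠ ⟨(i, j), hdij⟩ with hP
    set f1 := T.diags.filter P with hf1
    set f2 := (T.diags.filter (fun e => ¬ P e)).erase ⟨(i, j), hdij⟩ with hf2
    have hdmem : (⟨(i, j), hdij⟩ : Diagonal m) ∈ T.diags.filter (fun e => ¬ P e) :=
      Finset.mem_filter.2 ⟨hdT, fun hQ => hQ.2.2 rfl⟩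
    have hcards : f1.card + f2.card + 1 = m - 2 := by
      have hh1 : f1.card + (T.diags.filter (fun e => ¬ P e)).card = T.diags.card :=
        Finset.card_filter_add_card_filter_not (p := P)
      have hh2 : f2.card = (T.diags.filter (fun e => ¬ P e)).card - 1 :=
        Finset.card_erase_of_mem hdmem
      have hh3 : 0 < (T.diags.filter (fun e => ¬ P e)).card :=
        Finset.card_pos.2 ⟨_, hdmem⟩
      rw [T.card_eq] at hh1
      omega
    have hf1T : ∀ e ∈ f1, e ∈ T.diags := fun e he => (Finset.mem_filter.1 he).1
    have hf2T : ∀ e ∈ f2, e ∈ T.diags := fun e he =>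
      (Finset.mem_filter.1 (Finset.mem_of_mem_erase he)).1
    have hf1p : ∀ e ∈ f1, (e.val.1 + 2 ≤ e.val.2 ∧ e.val.2 ≤ m ∧
        ¬(e.val.1 = 0 ∧ e.val.2 = m)) ∧ (i ≤ e.val.1 ∧ e.val.2 ≤ j) ∧
        ¬(e.val.1 = i ∧ e.val.2 = j) := by
      intro e he
      have hQ := (Finset.mem_filter.1 he).2
      exact ⟨e.property, ⟨hQ.1, hQ.2.1⟩, fun h => hQ.2.2 (Subtype.ext (Prod.ext h.1 h.2))⟩
    have hf2p : ∀ e ∈ f2, (e.val.1 + 2 ≤ e.val.2 ∧ e.val.2 ≤ m ∧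
        ¬(e.val.1 = 0 ∧ e.val.2 = m)) ∧
        (e.val.2 ≤ i ∨ j ≤ e.val.1 ∨ (e.val.1 ≤ i ∧ j ≤ e.val.2)) ∧
        ¬(e.val.1 = i ∧ e.val.2 = j) := by
      intro e he
      have hne := Finset.ne_of_mem_erase he
      have hnP : ¬ P e := (Finset.mem_filter.1 (Finset.mem_of_mem_erase he)).2
      have hnc : ¬ ACross' (i, j) e.val := T.noncross _ hdT _ (hf2T e he)
      have hvne : ¬(e.val.1 = i ∧ e.val.2 = j) := fun h => hne (Subtype.ext (Prod.ext h.1 h.2))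
      have hdp : e.val.1 + 2 ≤ e.val.2 ∧ e.val.2 ≤ m ∧ ¬(e.val.1 = 0 ∧ e.val.2 = m) :=
        e.property
      have hlt : e.val.1 < i ∨ j < e.val.2 := by
        by_contra hcc
        push_neg at hcc
        exact hnP ⟨hcc.1, hcc.2, hne⟩
      exact ⟨hdp, shape_of hdd hdp hlt hnc, hvne⟩
    set S1 := f1.image (fun e => (e.val.1 - i, e.val.2 - i)) with hS1
    set S2 := f2.image (fun e => rotp i j (m - j) e.val) with hS2
    have hS1good : AGood (j - i) S1 := by
      constructor
      · intro p hp
        obtain ⟨e, he, rfl⟩ := Finset.mem_image.1 hp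
        obtain ⟨hdp, hsh, hne⟩ := hf1p e he
        exact sub_isdiag hdd hdp hsh.1 hsh.2 hne
      · intro p hp q hq
        obtain ⟨e, he, rfl⟩ := Finset.mem_image.1 hp
        obtain ⟨e', he', rfl⟩ := Finset.mem_image.1 hq
        obtain ⟨hdp, hsh, -⟩ := hf1p e he
        obtain ⟨hdp', hsh', -⟩ := hf1p e' he'
        exact sub_nocross hsh.1 hsh'.1 (T.noncross _ (hf1T e he) _ (hf1T e' he'))
          hdp.1 hdp'.1
    have hS2good : AGood (m - j + i + 1) S2 := by
      constructor
      · intro p hp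
        obtain ⟨e, he, rfl⟩ := Finset.mem_image.1 hp
        obtain ⟨hdp, hsh, hne⟩ := hf2p e he
        exact rotp_isdiag hdd hdp hsh hne
      · intro p hp q hq
        obtain ⟨e, he, rfl⟩ := Finset.mem_image.1 hp
        obtain ⟨e', he', rfl⟩ := Finset.mem_image.1 hq
        obtain ⟨hdp, hsh, -⟩ := hf2p e he
        obtain ⟨hdp', hsh', -⟩ := hf2p e' he'
        exact rotp_nocross hdd hdp hdp' hsh hsh'
          (T.noncross _ (hf2T e he) _ (hf2T e' he'))
    have hinj1 : Set.InjOn (fun e : Diagonal m => (e.val.1 - i, e.val.2 - i)) f1 := by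
      intro e he e' he' hEq
      obtain ⟨hdp, hsh, -⟩ := hf1p e he
      obtain ⟨hdp', hsh', -⟩ := hf1p e' he'
      simp only [Prod.mk.injEq] at hEq
      refine Subtype.ext (Prod.ext ?_ ?_) <;> omega
    have hinj2 : Set.InjOn (fun e : Diagonal m => rotp i j (m - j) e.val) f2 := by
      intro e he e' he' hEq
      obtain ⟨hdp, hsh, -⟩ := hf2p e he
      obtain ⟨hdp', hsh', -⟩ := hf2p e' he'
      have h := rotp_inj hdd hdp hdp' hsh hsh' hEq
      exact Subtype.ext (Prod.ext h.1 h.2)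
    have hc1 : S1.card = j - i - 2 ∧ S2.card = m - j + i + 1 - 2 := by
      have e1 : S1.card = f1.card := Finset.card_image_of_injOn hinj1
      have e2 : S2.card = f2.card := Finset.card_image_of_injOn hinj2
      have b1 := agood_card_le _ _ hS1good
      have b2 := agood_card_le _ _ hS2good
      omega
    refine ⟨hij, ?_, ?_⟩
    · show 3 ≤ (y '' Set.Icc i j).ncard
      rw [hn1, ← himg1]
      refine three_vals (by omega) hS1good hc1.1 hside1 ?_ ?_
      · show y (i + (j - i)) ≠ y (i + 0)
        rw [h1N, h10]
        exact fun h => hij h.symm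
      · intro p hp
        obtain ⟨e, he, rfl⟩ := Finset.mem_image.1 hp
        obtain ⟨hdp, hsh, -⟩ := hf1p e he
        have hyy := hPD _ (hf1T e he)
        show y (i + (e.val.1 - i)) ≠ y (i + (e.val.2 - i))
        rw [show i + (e.val.1 - i) = e.val.1 by omega, show i + (e.val.2 - i) = e.val.2 by omega]
        exact hyy
    · show 3 ≤ (y '' (Set.Icc 0 i ∪ Set.Icc j m)).ncard
      rw [hn2, ← himg2]
      refine three_vals (by omega) hS2good hc1.2 hside2 ?_ ?_
      · show y (vmap j (m - j) (m - j + i + 1)) ≠ y (vmap j (m - j) 0)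
        rw [h2N, h20]
        exact hij
      · intro p hp
        obtain ⟨e, he, rfl⟩ := Finset.mem_image.1 hp
        obtain ⟨hdp, hsh, hne⟩ := hf2p e he
        have hyy := hPD _ (hf2T e he)
        show y (vmap j (m - j) (rotp i j (m - j) e.val).1) ≠
          y (vmap j (m - j) (rotp i j (m - j) e.val).2)
        simp only [rotp]
        split_ifs with hb1 hb2
        · show y (vmap j (m - j) (e.val.1 + (m - j) + 1)) ≠
            y (vmap j (m - j) (e.val.2 + (m - j) + 1))
          rw [hz2i _ (by omega), hz2i _ (by omega)]
          exact hyy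
        · show y (vmap j (m - j) (e.val.1 - j)) ≠ y (vmap j (m - j) (e.val.2 - j))
          rw [hz2j _ (by omega) (by omega), hz2j _ (by omega) (by omega)]
          exact hyy
        · show y (vmap j (m - j) (e.val.2 - j)) ≠ y (vmap j (m - j) (e.val.1 + (m - j) + 1))
          rw [hz2j _ (by omega) (by omega), hz2i _ (by omega)]
          exact fun h => hyy h.symm
  · rintro ⟨hij0, hv1, hv2⟩
    have hij' : y i ≠ y j := hij0
    have hv1' : 3 ≤ ((Finset.Icc 0 (j - i)).image (fun k => y (i + k))).card := by
      rw [himg1, ← hn1]; exact hv1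
    have hv2' : 3 ≤ ((Finset.Icc 0 (m - j + i + 1)).image
        (fun k => y (vmap j (m - j) k))).card := by
      rw [himg2, ← hn2]; exact hv2
    obtain ⟨S1, hS1good, hS1card, hS1diag⟩ := exists_good (j - i) (by omega)
      (fun k => y (i + k)) hside1
      (by show y (i + (j - i)) ≠ y (i + 0); rw [h1N, h10]; exact fun h => hij' h.symm)
      (Or.inr hv1')
    obtain ⟨S2, hS2good, hS2card, hS2diag⟩ := exists_good (m - j + i + 1) (by omega)
      (fun k => y (vmap j (m - j) k)) hside2
      (by show y (vmap j (m - j) (m - j + i + 1)) ≠ y (vmap j (m - j) 0);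
          rw [h2N, h20]; exact hij')
      (Or.inr hv2')
    have hS1f : ∀ e ∈ S1, e.1 + 2 ≤ e.2 ∧ e.2 ≤ j - i ∧ ¬(e.1 = 0 ∧ e.2 = j - i) :=
      fun e he => hS1good.1 e he
    have hS2f : ∀ e ∈ S2, e.1 + 2 ≤ e.2 ∧ e.2 ≤ m - j + i + 1 ∧
        ¬(e.1 = 0 ∧ e.2 = m - j + i + 1) := fun e he => hS2good.1 e he
    set Av : Finset (ℕ × ℕ) := insert (i, j)
      ((S1.image (fun e => (i + e.1, i + e.2))) ∪ (S2.image (unrotp i j (m - j)))) with hAv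
    have hAdiag : ∀ p ∈ Av, IsDiag m p := by
      intro p hp
      rcases Finset.mem_insert.1 hp with rfl | hp
      · exact hdij
      rcases Finset.mem_union.1 hp with hp | hp
      · obtain ⟨e, he, rfl⟩ := Finset.mem_image.1 hp
        exact plus_isdiag hdd (hS1f e he)
      · obtain ⟨e, he, rfl⟩ := Finset.mem_image.1 hp
        exact unrotp_isdiag hdd (hS2f e he)
    have hAprop : ∀ p ∈ Av, y p.1 ≠ y p.2 := by
      intro p hp
      rcases Finset.mem_insert.1 hp with rfl | hp
      · exact hij'
      rcases Finset.mem_union.1 hp with hp | hp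
      · obtain ⟨e, he, rfl⟩ := Finset.mem_image.1 hp
        exact hS1diag e he
      · obtain ⟨e, he, rfl⟩ := Finset.mem_image.1 hp
        have hf := hS2f e he
        have hzz := hS2diag e he
        show y (unrotp i j (m - j) e).1 ≠ y (unrotp i j (m - j) e).2
        simp only [unrotp]
        split_ifs with hb1 hb2
        · show y (j + e.1) ≠ y (j + e.2)
          have c1 : vmap j (m - j) e.1 = j + e.1 := by
            simp only [vmap]; rw [if_pos (by omega)]
          have c2 : vmap j (m - j) e.2 = j + e.2 := by
            simp only [vmap]; rw [if_pos (by omega)]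
          rw [← c1, ← c2]
          exact hzz
        · show y (e.1 - (m - j) - 1) ≠ y (e.2 - (m - j) - 1)
          have c1 : vmap j (m - j) e.1 = e.1 - (m - j) - 1 := by
            simp only [vmap]; rw [if_neg (by omega)]
          have c2 : vmap j (m - j) e.2 = e.2 - (m - j) - 1 := by
            simp only [vmap]; rw [if_neg (by omega)]
          rw [← c1, ← c2]
          exact hzz
        · show y (e.2 - (m - j) - 1) ≠ y (j + e.1)
          have c1 : vmap j (m - j) e.1 = j + e.1 := by
            simp only [vmap]; rw [if_pos (by omega)]
          have c2 : vmap j (m - j) e.2 = e.2 - (m - j) - 1 := by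
            simp only [vmap]; rw [if_neg (by omega)]
          rw [← c1, ← c2]
          exact fun h => hzz h.symm
    have hAnc : ∀ p ∈ Av, ∀ q ∈ Av, ¬ ACross' p q := by
      intro p hp q hq
      rcases Finset.mem_insert.1 hp with rfl | hp <;> rcases Finset.mem_insert.1 hq with rfl | hq
      · intro hc; unfold ACross' at hc; omega
      · rcases Finset.mem_union.1 hq with hq | hq
        · obtain ⟨e, he, rfl⟩ := Finset.mem_image.1 hq
          exact (nc_d_plus hdd (hS1f e he)).1
        · obtain ⟨e, he, rfl⟩ := Finset.mem_image.1 hq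
          exact (nc_d_unrotp hdd (hS2f e he)).1
      · rcases Finset.mem_union.1 hp with hp | hp
        · obtain ⟨e, he, rfl⟩ := Finset.mem_image.1 hp
          exact (nc_d_plus hdd (hS1f e he)).2
        · obtain ⟨e, he, rfl⟩ := Finset.mem_image.1 hp
          exact (nc_d_unrotp hdd (hS2f e he)).2
      · rcases Finset.mem_union.1 hp with hp | hp <;> rcases Finset.mem_union.1 hq with hq | hq
        · obtain ⟨e, he, rfl⟩ := Finset.mem_image.1 hp
          obtain ⟨e', he', rfl⟩ := Finset.mem_image.1 hq
          exact plus_nocross (hS1good.2 e he e' he')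
        · obtain ⟨e, he, rfl⟩ := Finset.mem_image.1 hp
          obtain ⟨e', he', rfl⟩ := Finset.mem_image.1 hq
          exact (nc_plus_unrotp hdd (hS1f e he) (hS2f e' he')).1
        · obtain ⟨e, he, rfl⟩ := Finset.mem_image.1 hp
          obtain ⟨e', he', rfl⟩ := Finset.mem_image.1 hq
          exact (nc_plus_unrotp hdd (hS1f e' he') (hS2f e he)).2
        · obtain ⟨e, he, rfl⟩ := Finset.mem_image.1 hp
          obtain ⟨e', he', rfl⟩ := Finset.mem_image.1 hq
          exact unrotp_nocross hdd (hS2f e he) (hS2f e' he') (hS2good.2 e he e' he')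
    have hnotmem : (i, j) ∉
        (S1.image (fun e => (i + e.1, i + e.2))) ∪ (S2.image (unrotp i j (m - j))) := by
      intro h
      rcases Finset.mem_union.1 h with h | h
      · obtain ⟨e, he, hEq⟩ := Finset.mem_image.1 h
        exact plus_ne_d hdd (hS1f e he) hEq
      · obtain ⟨e, he, hEq⟩ := Finset.mem_image.1 h
        exact unrotp_ne_d hdd (hS2f e he) hEq
    have hdisj : Disjoint (S1.image (fun e => (i + e.1, i + e.2)))
        (S2.image (unrotp i j (m - j))) := by
      rw [Finset.disjoint_left]
      intro p hp1 hp2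
      obtain ⟨e, he, rfl⟩ := Finset.mem_image.1 hp1
      obtain ⟨e', he', hEq⟩ := Finset.mem_image.1 hp2
      exact ne_plus_unrotp hdd (hS1f e he) (hS2f e' he') hEq.symm
    have hinjA : Set.InjOn (fun e : ℕ × ℕ => (i + e.1, i + e.2)) S1 := by
      intro e he e' he' hEq
      simp only [Prod.mk.injEq] at hEq
      exact Prod.ext (by omega) (by omega)
    have hinjB : Set.InjOn (unrotp i j (m - j)) S2 := by
      intro e he e' he' hEq
      have h := unrotp_inj hdd (hS2f e he) (hS2f e' he') hEq
      exact Prod.ext h.1 h.2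
    have hAcard : Av.card = m - 2 := by
      rw [hAv, Finset.card_insert_of_notMem hnotmem,
        Finset.card_union_of_disjoint hdisj,
        Finset.card_image_of_injOn hinjA, Finset.card_image_of_injOn hinjB,
        hS1card, hS2card]
      omega
    refine ⟨⟨Av.subtype (IsDiag m), ?_, ?_⟩, ?_, ?_⟩
    · intro e he e' he'
      exact hAnc e.val (Finset.mem_subtype.1 he) e'.val (Finset.mem_subtype.1 he')
    · rw [Finset.card_subtype, Finset.filter_true_of_mem hAdiag, hAcard]
    · exact Finset.mem_subtype.2 (Finset.mem_insert_self _ _)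
    · intro e he
      exact hAprop e.val (Finset.mem_subtype.1 he)
end
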